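/- arXiv:2306.15303 — 5 statements merged into one kernel-verified Lean document; each statement's English description precedes it below -/
import Mathlib

section
/- For a positive definite Hermitian matrix E, the trace of the inverse of its diagonal part is at most the trace of its inverse: tr((E ∘ I)⁻¹) ≤ tr(E⁻¹), where E ∘ I denotes the diagonal matrix with the same diagonal entries as E. -/
/-!
Cauchy–Schwarz for the inner product `⟪x, y⟫ = xᴴ E y`, applied to `eᵢ` and `E⁻¹ eᵢ`, gives
`1 = |⟪eᵢ, E⁻¹ eᵢ⟫|² ≤ Eᵢᵢ (E⁻¹)ᵢᵢ`. Since `Eᵢᵢ > 0`, this says `Eᵢᵢ⁻¹ ≤ (E⁻¹)ᵢᵢ`;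
summing over `i` gives the trace inequality.
-/

open Matrix
open scoped ComplexOrder

namespace Matrix

variable {n 𝕜 : Type*} [Fintype n] [RCLike 𝕜]

theorem inv_diagonal_of_ne_zero [DecidableEq n] {K : Type*} [Field K] {v : n → K}
    (hv : ∀ i, v i ≠ 0) : (diagonal v)⁻¹ = diagonal fun i ↦ (v i)⁻¹ :=
  inv_eq_right_inv <| by simp [diagonal_mul_diagonal, hv]

theorem PosSemidef.norm_dotProduct_mulVec_sq_le {M : Matrix n n 𝕜} (hM : M.PosSemidef)
    (x y : n → 𝕜) :
    ‖star x ⬝ᵥ (M *ᵥ y)‖ ^ 2 ≤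
      RCLike.re (star x ⬝ᵥ (M *ᵥ x)) * RCLike.re (star y ⬝ᵥ (M *ᵥ y)) := by
  let := M.toSeminormedAddCommGroup hM
  let := M.toInnerProductSpace hM
  have hinner : ∀ u v : n → 𝕜, inner 𝕜 u v = star u ⬝ᵥ (M *ᵥ v) :=
    fun u v ↦ dotProduct_comm _ _
  have cauchy_schwarz := inner_mul_inner_self_le (𝕜 := 𝕜) x y
  rw [← inner_conj_symm y x, RCLike.norm_conj, ← sq] at cauchy_schwarz
  simpa only [hinner] using cauchy_schwarz

theorem PosDef.one_le_re_diag_mul_re_inv_diag [DecidableEq n] {E : Matrix n n 𝕜}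
    (hE : E.PosDef) (i : n) : 1 ≤ RCLike.re (E i i) * RCLike.re (E⁻¹ i i) := by
  have hEinv : E * E⁻¹ = 1 := mul_nonsing_inv E ((isUnit_iff_isUnit_det E).1 hE.isUnit)
  have h := hE.posSemidef.norm_dotProduct_mulVec_sq_le (Pi.single i 1) (E⁻¹ *ᵥ Pi.single i 1)
  rw [mulVec_mulVec, hEinv, one_mulVec] at h
  simpa [mulVec_single, dotProduct_single] using h

theorem PosDef.re_trace_inv_diagonal_le [DecidableEq n] {E : Matrix n n 𝕜} (hE : E.PosDef) :
    RCLike.re (diagonal fun i ↦ E i i)⁻¹.trace ≤ RCLike.re E⁻¹.trace := by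
  rw [inv_diagonal_of_ne_zero fun i ↦ hE.diag_pos.ne', trace_diagonal, trace, map_sum, map_sum]
  refine Finset.sum_le_sum fun i _ ↦ ?_
  obtain ⟨r, hr, hrE⟩ := RCLike.pos_iff_exists_ofReal.1 (hE.diag_pos (i := i))
  rw [← hrE, ← RCLike.ofReal_inv, RCLike.ofReal_re, inv_le_iff_one_le_mul₀' hr]
  simpa only [diag_apply, ← hrE, RCLike.ofReal_re] using hE.one_le_re_diag_mul_re_inv_diag i

end Matrix

/-- For a positive definite Hermitian matrix `E`, the trace of the inverse of its
diagonal part is at most the trace of its inverse. -/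
theorem trace_inv_diagonal_le {n : ℕ} (E : Matrix (Fin n) (Fin n) ℂ)
    (hE : E.PosDef) :
    ((Matrix.diagonal (fun i => E i i))⁻¹).trace.re ≤ (E⁻¹).trace.re :=
  hE.re_trace_inv_diagonal_le
end

section
/- For a positive definite Hermitian matrix E, replacing E by its diagonal part does not decrease the log-determinant capacity expression: log det(I + c · Σ² (E ∘ I)) ≥ log det(I + c · Σ² E), for any c > 0 and nonnegative diagonal matrix Σ². -/
/-!
Sylvester's identity `det (1 + AB) = det (1 + BA)` with `Σ = diag (√D)` turns
`det (I + c Σ² E)` into `det (I + c Σ E Σ)`, the determinant of a positive definite matrix whose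
diagonal entries `1 + c Dᵢ Eᵢᵢ` are exactly those of the diagonal matrix `I + c Σ² (E ∘ I)`.
Hadamard's inequality then compares the two determinants. Hadamard's inequality itself is
reduced, by a diagonal rescaling, to a positive semidefinite matrix with unit diagonal; its
eigenvalues sum to `n`, so `x ≤ exp (x - 1)` bounds their product by `1`.
-/

open Matrix
open scoped ComplexOrder

theorem Real.prod_le_exp_sum_sub_one {ι : Type*} (s : Finset ι) {x : ι → ℝ}
    (hx : ∀ i ∈ s, 0 ≤ x i) : ∏ i ∈ s, x i ≤ Real.exp (∑ i ∈ s, (x i - 1)) := by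
  rw [Real.exp_sum]
  exact Finset.prod_le_prod hx fun i _ => by linarith [Real.add_one_le_exp (x i - 1)]

namespace Matrix

variable {𝕜 : Type*} [RCLike 𝕜] {n : Type*} [Fintype n] [DecidableEq n]

theorem PosSemidef.det_le_one_of_diag_eq_one {A : Matrix n n 𝕜} (hA : A.PosSemidef)
    (hdiag : ∀ i, A i i = 1) : A.det ≤ 1 := by
  have htrace : ∑ i, hA.isHermitian.eigenvalues i = Fintype.card n := by
    have := congrArg RCLike.re hA.isHermitian.trace_eq_sum_eigenvalues
    simpa [trace, hdiag] using this.symm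
  have hprod : ∏ i, hA.isHermitian.eigenvalues i ≤ 1 := by
    calc ∏ i, hA.isHermitian.eigenvalues i
        ≤ Real.exp (∑ i, (hA.isHermitian.eigenvalues i - 1)) :=
          Real.prod_le_exp_sum_sub_one _ fun i _ => hA.eigenvalues_nonneg i
      _ = 1 := by simp [Finset.sum_sub_distrib, htrace]
  rw [hA.isHermitian.det_eq_prod_eigenvalues, ← RCLike.ofReal_prod, ← RCLike.ofReal_one]
  exact RCLike.ofReal_le_ofReal.2 hprod

theorem diagonal_mul_mul_diagonal_apply (d e : n → 𝕜) (A : Matrix n n 𝕜) (i j : n) :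
    (diagonal d * A * diagonal e) i j = d i * A i j * e j := by
  rw [mul_diagonal, diagonal_mul]

theorem PosSemidef.diagonal_ofReal_mul_mul {A : Matrix n n 𝕜} (hA : A.PosSemidef) (d : n → ℝ) :
    (diagonal (fun i => (d i : 𝕜)) * A * diagonal (fun i => (d i : 𝕜))).PosSemidef := by
  have hstar : (diagonal (fun i => (d i : 𝕜)))ᴴ = diagonal (fun i => (d i : 𝕜)) := by
    rw [diagonal_conjTranspose]
    congr 1
    funext i
    exact RCLike.conj_ofReal (d i)
  simpa [hstar] using hA.mul_mul_conjTranspose_same (diagonal fun i => (d i : 𝕜))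

theorem PosDef.det_le_prod_diag {A : Matrix n n 𝕜} (hA : A.PosDef) : A.det ≤ ∏ i, A i i := by
  set δ : n → 𝕜 := fun i => ((√(RCLike.re (A i i)))⁻¹ : ℝ)
  have hδ : ∀ i, δ i * A i i * δ i = 1 := by
    intro i
    have hpos : 0 < RCLike.re (A i i) := (RCLike.pos_iff.1 hA.diag_pos).1
    rw [← hA.isHermitian.coe_re_apply_self i, mul_comm, ← mul_assoc, ← RCLike.ofReal_mul,
      ← RCLike.ofReal_mul, ← mul_inv, Real.mul_self_sqrt hpos.le, inv_mul_cancel₀ hpos.ne',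
      RCLike.ofReal_one]
  have hN : (diagonal δ * A * diagonal δ).det ≤ 1 :=
    (hA.posSemidef.diagonal_ofReal_mul_mul _).det_le_one_of_diag_eq_one fun i => by
      rw [diagonal_mul_mul_diagonal_apply, hδ]
  have hdiag_nonneg : 0 ≤ ∏ i, A i i := Finset.prod_nonneg fun i _ => hA.diag_pos.le
  calc A.det = A.det * ∏ i, (δ i * A i i * δ i) := by
        simp only [hδ, Finset.prod_const_one, mul_one]
    _ = (diagonal δ * A * diagonal δ).det * ∏ i, A i i := by
        rw [det_mul, det_mul, det_diagonal, Finset.prod_mul_distrib, Finset.prod_mul_distrib]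
        ring
    _ ≤ 1 * ∏ i, A i i := mul_le_mul_of_nonneg_right hN hdiag_nonneg
    _ = ∏ i, A i i := one_mul _

theorem det_one_add_diagonal_mul_eq {D : n → ℝ} (hD : ∀ i, 0 ≤ D i) (E : Matrix n n 𝕜) :
    det (1 + diagonal (fun i => (D i : 𝕜)) * E) =
      det (1 + diagonal (fun i => (√(D i) : 𝕜)) * E * diagonal (fun i => (√(D i) : 𝕜))) := by
  have hsq : diagonal (fun i => (D i : 𝕜)) =
      diagonal (fun i => (√(D i) : 𝕜)) * diagonal (fun i => (√(D i) : 𝕜)) := by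
    rw [diagonal_mul_diagonal]
    congr 1
    funext i
    rw [← RCLike.ofReal_mul, Real.mul_self_sqrt (hD i)]
  rw [hsq, mul_assoc, det_one_add_mul_comm]

theorem det_one_add_diagonal_mul_diagonal (d e : n → 𝕜) :
    det (1 + diagonal d * diagonal e) = ∏ i, (1 + d i * e i) := by
  rw [diagonal_mul_diagonal, ← diagonal_one, diagonal_add, det_diagonal]

namespace PosSemidef

variable {E : Matrix n n 𝕜} {D : n → ℝ}

theorem posDef_one_add_diagonal_ofReal_mul_mul (hE : E.PosSemidef) (d : n → ℝ) :
    (1 + diagonal (fun i => (d i : 𝕜)) * E * diagonal (fun i => (d i : 𝕜))).PosDef :=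
  PosDef.one.add_posSemidef (hE.diagonal_ofReal_mul_mul d)

theorem det_one_add_diagonal_mul_pos (hE : E.PosSemidef) (hD : ∀ i, 0 ≤ D i) :
    0 < det (1 + diagonal (fun i => (D i : 𝕜)) * E) := by
  rw [det_one_add_diagonal_mul_eq hD]
  exact (hE.posDef_one_add_diagonal_ofReal_mul_mul _).det_pos

theorem det_one_add_diagonal_mul_le (hE : E.PosSemidef) (hD : ∀ i, 0 ≤ D i) :
    det (1 + diagonal (fun i => (D i : 𝕜)) * E) ≤ ∏ i, (1 + (D i : 𝕜) * E i i) := by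
  rw [det_one_add_diagonal_mul_eq hD]
  refine (hE.posDef_one_add_diagonal_ofReal_mul_mul _).det_le_prod_diag.trans_eq
    (Finset.prod_congr rfl fun i _ => ?_)
  rw [add_apply, one_apply_eq, diagonal_mul_mul_diagonal_apply,
    mul_right_comm, ← RCLike.ofReal_mul, Real.mul_self_sqrt (hD i)]

end PosSemidef

end Matrix

/-- Replacing a positive definite Hermitian matrix by its diagonal part does not decrease
the log-determinant capacity expression `log det(I + c Σ² E)`. -/
theorem logdet_diagonal_ge {n : ℕ} (E : Matrix (Fin n) (Fin n) ℂ) (hE : E.PosDef)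
    (c : ℝ) (hc : 0 < c) (D : Fin n → ℝ) (hD : ∀ i, 0 ≤ D i) :
    Real.log ((1 + (c : ℂ) • (Matrix.diagonal (fun i => (D i : ℂ)) *
        Matrix.diagonal (fun i => E i i))).det.re) ≥
      Real.log ((1 + (c : ℂ) • (Matrix.diagonal (fun i => (D i : ℂ)) * E)).det.re) := by
  have hscale : ∀ A : Matrix (Fin n) (Fin n) ℂ, (c : ℂ) • (diagonal (fun i => (D i : ℂ)) * A) =
      diagonal (fun i => ((c * D i : ℝ) : ℂ)) * A := by
    intro A
    rw [← smul_mul, ← diagonal_smul]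
    congr 2
    funext i
    simp
  have hcD : ∀ i, 0 ≤ c * D i := fun i => mul_nonneg hc.le (hD i)
  rw [hscale, hscale, det_one_add_diagonal_mul_diagonal]
  exact Real.log_le_log (Complex.pos_iff.1 (hE.posSemidef.det_one_add_diagonal_mul_pos hcD)).1
    (Complex.le_def.1 (hE.posSemidef.det_one_add_diagonal_mul_le hcD)).1
end

section
/- The function f(E) = log det(I + H E H*) is concave on the cone of positive semidefinite Hermitian matrices E. -/
open Matrix
open scoped ComplexOrder

/-!
For positive definite `A`, `B` and `a + b = 1`, `a, b ≥ 0`, write `A = S * S` with `S` positive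
definite and put `C = S⁻¹ B S⁻¹`. Then `a A + b B = S (a + b C) S`, so after cancelling
`log det A` concavity reduces to `b log det C ≤ log det (a + b C)`. Diagonalising `C` splits this
into the scalar inequalities `b log λ ≤ log (a + b λ)` over its eigenvalues, which is concavity
of `log`. Finally `E ↦ 1 + H E Hᴴ` is affine and maps positive semidefinite matrices to positive
definite ones.
-/

lemma RCLike.log_re_mul {𝕜 : Type*} [RCLike 𝕜] {x y : 𝕜} (hx : 0 < x) (hy : 0 < y) :
    Real.log (re (x * y)) = Real.log (re x) + Real.log (re y) := by
  obtain ⟨x, hx', rfl⟩ := pos_iff_exists_ofReal.1 hx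
  obtain ⟨y, hy', rfl⟩ := pos_iff_exists_ofReal.1 hy
  simp only [← ofReal_mul, ofReal_re]
  exact Real.log_mul hx'.ne' hy'.ne'

namespace Matrix

open RCLike

lemma convex_setOf_posDef {n 𝕜 : Type*} [RCLike 𝕜] :
    Convex ℝ {A : Matrix n n 𝕜 | A.PosDef} := by
  intro A hA B hB a b ha hb hab
  rcases ha.eq_or_lt with rfl | ha
  · obtain rfl : b = 1 := by simpa using hab
    simpa using hB
  · exact (PosDef.smul hA ha).add_posSemidef (hB.posSemidef.smul hb)

variable {n 𝕜 : Type*} [RCLike 𝕜] [Fintype n] [DecidableEq n]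

lemma IsHermitian.log_re_det_cfc {A : Matrix n n 𝕜} (hA : A.IsHermitian) {f : ℝ → ℝ}
    (hf : ∀ i, f (hA.eigenvalues i) ≠ 0) :
    Real.log (re (cfc f A).det) = ∑ i, Real.log (f (hA.eigenvalues i)) := by
  rw [hA.cfc_eq, IsHermitian.cfc, Unitary.conjStarAlgAut_apply, det_mul_comm, ← mul_assoc,
    Unitary.coe_star_mul_self, one_mul, det_diagonal]
  simp only [Function.comp_apply, ← ofReal_prod, ofReal_re]
  exact Real.log_prod fun i _ => hf i

lemma PosDef.mul_log_re_det_le {C : Matrix n n 𝕜} (hC : C.PosDef) {a b : ℝ} (ha : 0 ≤ a)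
    (hb : 0 ≤ b) (hab : a + b = 1) :
    b * Real.log (re C.det) ≤ Real.log (re (a • 1 + b • C).det) := by
  have hpos := hC.eigenvalues_pos
  have hC_sa : IsSelfAdjoint C := hC.1
  have hcomb_pos (i : n) : 0 < a + b * hC.1.eigenvalues i := by
    simpa using convex_Ioi (0 : ℝ) one_pos (hpos i) ha hb hab
  have hcfc : a • 1 + b • C = cfc (fun x => a + b * x) C := by
    rw [cfc_const_add a (b * ·) C, cfc_const_mul_id b C, Algebra.algebraMap_eq_smul_one]
  have hdet : Real.log (re C.det) = ∑ i, Real.log (hC.1.eigenvalues i) := by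
    conv_lhs => rw [← cfc_id' ℝ C]
    exact hC.1.log_re_det_cfc fun i => (hpos i).ne'
  rw [hcfc, hC.1.log_re_det_cfc (fun i => (hcomb_pos i).ne'), hdet, Finset.mul_sum]
  refine Finset.sum_le_sum fun i _ => ?_
  simpa using strictConcaveOn_log_Ioi.concaveOn.2 (Set.mem_Ioi.2 one_pos) (hpos i) ha hb hab

open scoped MatrixOrder in
lemma PosDef.exists_posDef_eq_mul_self {A : Matrix n n 𝕜} (hA : A.PosDef) :
    ∃ S : Matrix n n 𝕜, S.PosDef ∧ A = S * S := by
  obtain ⟨S, hS, hA⟩ :=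
    CStarAlgebra.isStrictlyPositive_iff_exists_isStrictlyPositive_and_eq_mul_self.1
      hA.isStrictlyPositive
  exact ⟨S, hS.posDef, hA⟩

lemma concaveOn_log_re_det :
    ConcaveOn ℝ {A : Matrix n n 𝕜 | A.PosDef} (fun A => Real.log (re A.det)) := by
  refine ⟨convex_setOf_posDef, fun A hA B hB a b ha hb hab => ?_⟩
  obtain ⟨S, hS, rfl⟩ := hA.exists_posDef_eq_mul_self
  set C := S⁻¹ * B * S⁻¹
  have hC : C.PosDef := by
    simpa [C, hS.inv.1.eq] using
      hB.conjTranspose_mul_mul_same (mulVec_injective_iff_isUnit.2 hS.inv.isUnit)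
  have hB_eq : B = S * C * S := by
    have hdet := (isUnit_iff_isUnit_det S).1 hS.isUnit
    simp only [C, Matrix.mul_assoc, nonsing_inv_mul _ hdet, mul_one,
      mul_nonsing_inv_cancel_left _ _ hdet]
  have hlog (M : Matrix n n 𝕜) (hM : 0 < M.det) :
      Real.log (re (S * M * S).det) = Real.log (re (S * S).det) + Real.log (re M.det) := by
    rw [det_mul, det_mul, det_mul, mul_right_comm, log_re_mul (mul_pos hS.det_pos hS.det_pos) hM]
  have hcomb : a • (S * S) + b • B = S * (a • 1 + b • C) * S := by
    rw [hB_eq]; simp only [mul_add, add_mul, mul_smul_comm, smul_mul_assoc, mul_one]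
  simp only [smul_eq_mul]
  have hM : (a • 1 + b • C).PosDef := convex_setOf_posDef PosDef.one hC ha hb hab
  rw [hcomb, hB_eq, hlog _ hC.det_pos, hlog _ hM.det_pos]
  linear_combination hC.mul_log_re_det_le ha hb hab + Real.log (re (S * S).det) * hab

end Matrix

/-- The function `E ↦ log det(I + H E Hᴴ)` is concave on the cone of positive semidefinite
Hermitian matrices. -/
theorem logdet_concave {m n : ℕ} (H : Matrix (Fin m) (Fin n) ℂ)
    (E₁ E₂ : Matrix (Fin n) (Fin n) ℂ) (hE₁ : E₁.PosSemidef) (hE₂ : E₂.PosSemidef)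
    (t : ℝ) (ht₀ : 0 ≤ t) (ht₁ : t ≤ 1) :
    t * Real.log ((1 + H * E₁ * Hᴴ).det.re) +
      (1 - t) * Real.log ((1 + H * E₂ * Hᴴ).det.re) ≤
    Real.log ((1 + H * ((t : ℂ) • E₁ + ((1 - t : ℝ) : ℂ) • E₂) * Hᴴ).det.re) := by
  have hpos {E : Matrix (Fin n) (Fin n) ℂ} (hE : E.PosSemidef) : (1 + H * E * Hᴴ).PosDef :=
    PosDef.one.add_posSemidef (hE.mul_mul_conjTranspose_same H)
  have hcomb : 1 + H * ((t : ℂ) • E₁ + ((1 - t : ℝ) : ℂ) • E₂) * Hᴴ =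
      t • (1 + H * E₁ * Hᴴ) + (1 - t) • (1 + H * E₂ * Hᴴ) := by
    simp only [Complex.coe_smul, Matrix.mul_add, Matrix.add_mul, Matrix.mul_smul, Matrix.smul_mul]
    module
  rw [hcomb]
  exact concaveOn_log_re_det.2 (hpos hE₁) (hpos hE₂) ht₀ (sub_nonneg.2 ht₁)
    (add_sub_cancel t 1)
end

section
/- Let λ₁ ≥ λ₂ ≥ ... ≥ λ_r > 0 and let e₁,...,e_r > 0 satisfy, for each i, the stationarity equation 1/η − γσ²N/(B eᵢ²) − (ν/(ln2·T))·(λᵢ²/σ_c²)/(1 + λᵢ²eᵢ/(σ_c²τ)) = 0, where η, σ², N, B, T, σ_c², τ > 0 and γ, ν ≥ 0. Then e₁ ≥ e₂ ≥ ... ≥ e_r. -/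
/-!
Write the stationarity equation as `1 / η = a / e² + c / (σc / λ² + e / τ)` with
`a = γ σ² N / B ≥ 0` and `c = ν / (ln 2 · T) ≥ 0`. The right-hand side is antitone in `e` and
monotone in `λ`, and strictly so in `e` because it equals `1 / η > 0`, which forces `a > 0` or
`c > 0`. So if `λ_j ≤ λ_i` but `e_i < e_j`, the right-hand side at `(λ_j, e_j)` would be strictly
smaller than at `(λ_i, e_i)`, although both equal `1 / η`.
-/

noncomputable def kktRhs (a c σc τ l e : ℝ) : ℝ := a / e ^ 2 + c / (σc / l ^ 2 + e / τ)

lemma kktRhs_lt_of_pos {a c σc τ l l' e e' : ℝ} (ha : 0 ≤ a) (hc : 0 ≤ c) (hσc : 0 ≤ σc)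
    (hτ : 0 < τ) (hl' : 0 < l') (hl : l' ≤ l) (he : 0 < e) (hee' : e < e')
    (hpos : 0 < kktRhs a c σc τ l e) :
    kktRhs a c σc τ l' e' < kktRhs a c σc τ l e := by
  have hD : 0 < σc / l ^ 2 + e / τ := by positivity
  have hDD' : σc / l ^ 2 + e / τ < σc / l' ^ 2 + e' / τ := by
    have : σc / l ^ 2 ≤ σc / l' ^ 2 := by gcongr
    have : e / τ < e' / τ := by gcongr
    linarith
  have hsq : e ^ 2 < e' ^ 2 := by gcongr
  unfold kktRhs at hpos ⊢
  rcases ha.eq_or_lt with rfl | ha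
  · have hc : 0 < c := by
      simp only [zero_div, zero_add] at hpos
      exact (div_pos_iff_of_pos_right hD).mp hpos
    simpa using div_lt_div_of_pos_left hc hD hDD'
  · exact add_lt_add_of_lt_of_le (div_lt_div_of_pos_left ha (by positivity) hsq)
      (div_le_div_of_nonneg_left hc hD hDD'.le)

lemma sq_div_div_one_add_eq {σc τ l e : ℝ} (hσc : σc ≠ 0) (hτ : τ ≠ 0) (hl : l ≠ 0) :
    l ^ 2 / σc / (1 + l ^ 2 * e / (σc * τ)) = 1 / (σc / l ^ 2 + e / τ) := by
  field_simp

/-- Ordering of optimal power allocations: if `λ₁ ≥ ... ≥ λ_r > 0` and each `eᵢ > 0`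
satisfies the KKT stationarity equation, then `e₁ ≥ e₂ ≥ ... ≥ e_r`. -/
theorem power_allocation_ordered {r : ℕ} (lam e : Fin r → ℝ)
    (hlam_pos : ∀ i, 0 < lam i) (hlam : ∀ i j : Fin r, i ≤ j → lam j ≤ lam i)
    (he : ∀ i, 0 < e i)
    (η σsq N B T σc τ : ℝ) (hη : 0 < η) (hσ : 0 < σsq) (hN : 0 < N) (hB : 0 < B)
    (hT : 0 < T) (hσc : 0 < σc) (hτ : 0 < τ)
    (γ ν : ℝ) (hγ : 0 ≤ γ) (hν : 0 ≤ ν)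
    (hstat : ∀ i, 1 / η - γ * σsq * N / (B * (e i) ^ 2) -
      (ν / (Real.log 2 * T)) * (((lam i) ^ 2 / σc) / (1 + (lam i) ^ 2 * e i / (σc * τ))) = 0) :
    ∀ i j : Fin r, i ≤ j → e j ≤ e i := by
  intro i j hij
  by_contra! h
  set a := γ * σsq * N / B
  set c := ν / (Real.log 2 * T)
  have ha : 0 ≤ a := by positivity
  have hc : 0 ≤ c := div_nonneg hν (mul_pos (Real.log_pos one_lt_two) hT).le
  have hrhs : ∀ k, kktRhs a c σc τ (lam k) (e k) = 1 / η := fun k => by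
    have hk := hstat k
    rw [sq_div_div_one_add_eq hσc.ne' hτ.ne' (hlam_pos k).ne', ← div_div] at hk
    rw [kktRhs, ← mul_one_div c]
    linarith
  have hlt := kktRhs_lt_of_pos ha hc hσc.le hτ (hlam_pos j) (hlam i j hij) (he i) h
    (by rw [hrhs]; positivity)
  rw [hrhs, hrhs] at hlt
  exact hlt.false
end

section
/- If e₁,...,e_r > 0 satisfy the ISAC stationarity equations with dual variables γ ≥ 0, ν ≥ 0, and e_{r+1} = √(ηγσ²N/B), then e_r ≥ e_{r+1}; that is, ISAC subchannels receive at least as much energy as sensing-only subchannels. -/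
lemma isac_stationarity_rhs_nonneg {T σc τ lam ν er : ℝ} (hT : 0 < T) (hσc : 0 < σc)
    (hτ : 0 < τ) (hν : 0 ≤ ν) (her : 0 ≤ er) :
    0 ≤ (ν / (Real.log 2 * T)) * ((lam ^ 2 / σc) / (1 + lam ^ 2 * er / (σc * τ))) := by
  have hlog : 0 < Real.log 2 := Real.log_pos one_lt_two
  positivity

lemma sqrt_mul_div_le_of_div_mul_sq_le_one_div {η a B e : ℝ} (hη : 0 < η) (hB : 0 < B)
    (he : 0 < e) (h : a / (B * e ^ 2) ≤ 1 / η) : √(η * a / B) ≤ e := by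
  rw [div_le_div_iff₀ (by positivity) hη, one_mul] at h
  rw [Real.sqrt_le_left he.le, div_le_iff₀ hB]
  linarith

theorem isac_ge_sensing_energy_general (η σsq N B T σc τ lam : ℝ)
    (hη : 0 < η) (hB : 0 < B) (hT : 0 < T)
    (hσc : 0 < σc) (hτ : 0 < τ)
    (γ ν : ℝ) (hν : 0 ≤ ν)
    (er : ℝ) (her : 0 < er)
    (hstat : 1 / η - γ * σsq * N / (B * er ^ 2) =
      (ν / (Real.log 2 * T)) * ((lam ^ 2 / σc) / (1 + lam ^ 2 * er / (σc * τ))))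
    (erp : ℝ) (herp : erp = Real.sqrt (η * γ * σsq * N / B)) :
    erp ≤ er := by
  have hrhs := isac_stationarity_rhs_nonneg (lam := lam) hT hσc hτ hν her.le
  have hdual : γ * σsq * N / (B * er ^ 2) ≤ 1 / η := by linarith
  rw [herp, show η * γ * σsq * N = η * (γ * σsq * N) by ring]
  exact sqrt_mul_div_le_of_div_mul_sq_le_one_div hη hB her hdual

/-- ISAC subchannels receive at least as much energy as sensing-only subchannels: if
`e_r > 0` satisfies the ISAC stationarity equation and `e_{r+1} = √(ηγσ²N/B)`, then
`e_{r+1} ≤ e_r`. -/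
theorem isac_ge_sensing_energy (η σsq N B T σc τ lam : ℝ)
    (hη : 0 < η) (hσ : 0 < σsq) (hN : 0 < N) (hB : 0 < B) (hT : 0 < T)
    (hσc : 0 < σc) (hτ : 0 < τ) (hlam : 0 < lam)
    (γ ν : ℝ) (hγ : 0 ≤ γ) (hν : 0 ≤ ν)
    (er : ℝ) (her : 0 < er)
    (hstat : 1 / η - γ * σsq * N / (B * er ^ 2) =
      (ν / (Real.log 2 * T)) * ((lam ^ 2 / σc) / (1 + lam ^ 2 * er / (σc * τ))))
    (erp : ℝ) (herp : erp = Real.sqrt (η * γ * σsq * N / B)) :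
    erp ≤ er :=
  isac_ge_sensing_energy_general η σsq N B T σc τ lam hη hB hT hσc hτ γ ν hν er her hstat erp herp
end
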